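/- Let P be a grounded Petri net with initial marking B. Then every automorphism of a B-P-process is the identity: if G is a finite acyclic graph with etale map p : G → P whose in-boundary is B, then any etale isomorphism f : G ≅ G satisfying p ∘ f = p and restricting to the identity on B is the identity map. -/

import Mathlib

/-- A whole-grain Petri net: a diagram of finite sets `S ← I → T ← O → S`. -/
structure PetriNet where
  S : Type
  I : Type
  T : Type
  O : Type
  [finS : Finite S]
  [finI : Finite I]
  [finT : Finite T]
  [finO : Finite O]
  sI : I → S
  tI : I → T
  tO : O → T
  sO : O → S

/-- A graph (AINOA style): a diagram of finite sets `A ← A_N → N ← _N A → A`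
with the outer maps injective. -/
structure WGGraph where
  A : Type
  AN : Type
  N : Type
  NA : Type
  [finA : Finite A]
  [finAN : Finite AN]
  [finN : Finite N]
  [finNA : Finite NA]
  srcEdge : AN → A
  srcNode : AN → N
  tgtNode : NA → N
  tgtEdge : NA → A
  inj_srcEdge : Function.Injective srcEdge
  inj_tgtEdge : Function.Injective tgtEdge

/-- `x ⋖ y`: there is an inner edge from node `x` to node `y`. -/
def WGGraph.prec (G : WGGraph) (x y : G.N) : Prop :=
  ∃ (o : G.NA) (i : G.AN), G.tgtNode o = x ∧ G.srcNode i = y ∧ G.tgtEdge o = G.srcEdge i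

/-- Acyclicity: no directed cycles. -/
def WGGraph.Acyclic (G : WGGraph) : Prop := ∀ x : G.N, ¬ Relation.TransGen G.prec x x

/-- In-boundary: edges not outgoing of any node. -/
def WGGraph.inBoundary (G : WGGraph) : Set G.A := {a | a ∉ Set.range G.tgtEdge}

/-- Out-boundary: edges not incoming to any node. -/
def WGGraph.outBoundary (G : WGGraph) : Set G.A := {a | a ∉ Set.range G.srcEdge}

/-- An etale map from a graph `G` to a Petri net `P`: componentwise maps with the
two middle squares pullbacks. -/
structure EtaleMap (G : WGGraph) (P : PetriNet) where
  mapA : G.A → P.S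
  mapI : G.AN → P.I
  mapN : G.N → P.T
  mapO : G.NA → P.O
  comm_sI : ∀ m, P.sI (mapI m) = mapA (G.srcEdge m)
  comm_tI : ∀ m, P.tI (mapI m) = mapN (G.srcNode m)
  comm_tO : ∀ o, P.tO (mapO o) = mapN (G.tgtNode o)
  comm_sO : ∀ o, P.sO (mapO o) = mapA (G.tgtEdge o)
  etale_in : ∀ (x : G.N) (i : P.I), P.tI i = mapN x →
      ∃! m : G.AN, G.srcNode m = x ∧ mapI m = i
  etale_out : ∀ (x : G.N) (o : P.O), P.tO o = mapN x →
      ∃! m : G.NA, G.tgtNode m = x ∧ mapO m = o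

/-- An etale map of graphs: componentwise maps with the two middle squares pullbacks. -/
structure GraphMap (G H : WGGraph) where
  mapA : G.A → H.A
  mapAN : G.AN → H.AN
  mapN : G.N → H.N
  mapNA : G.NA → H.NA
  comm_srcEdge : ∀ m, H.srcEdge (mapAN m) = mapA (G.srcEdge m)
  comm_srcNode : ∀ m, H.srcNode (mapAN m) = mapN (G.srcNode m)
  comm_tgtNode : ∀ o, H.tgtNode (mapNA o) = mapN (G.tgtNode o)
  comm_tgtEdge : ∀ o, H.tgtEdge (mapNA o) = mapA (G.tgtEdge o)
  etale_in : ∀ (x : G.N) (m' : H.AN), H.srcNode m' = mapN x →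
      ∃! m : G.AN, G.srcNode m = x ∧ mapAN m = m'
  etale_out : ∀ (x : G.N) (o' : H.NA), H.tgtNode o' = mapN x →
      ∃! o : G.NA, G.tgtNode o = x ∧ mapNA o = o'

/-- `f : G → H` is a map over `P` with respect to etale maps `p : G → P`, `q : H → P`. -/
def GraphMap.OverP {G H : WGGraph} {P : PetriNet} (f : GraphMap G H)
    (p : EtaleMap G P) (q : EtaleMap H P) : Prop :=
  (∀ a, q.mapA (f.mapA a) = p.mapA a) ∧
  (∀ m, q.mapI (f.mapAN m) = p.mapI m) ∧
  (∀ x, q.mapN (f.mapN x) = p.mapN x) ∧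
  (∀ o, q.mapO (f.mapNA o) = p.mapO o)

/-!
An automorphism over `P` fixing the in-boundary fixes every node, by well-founded induction
along the acyclic precedence relation: since `P` is grounded, a node `x` has some input arc `m`,
and the edge entering along `m` either lies in the in-boundary or leaves a strictly earlier node,
whose output arcs are fixed by etaleness over `P`. Injectivity of `srcEdge` then fixes `m`, hence
`x`. Once all nodes are fixed, etaleness over `P` fixes all arcs, and with them all edges.
-/

theorem WGGraph.Acyclic.wellFounded_transGen {G : WGGraph} (hG : G.Acyclic) :
    WellFounded (Relation.TransGen G.prec) :=
  have : Finite G.N := G.finN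
  have : Std.Irrefl (Relation.TransGen G.prec) := ⟨hG⟩
  Finite.wellFounded_of_trans_of_irrefl _

namespace GraphMap

variable {P : PetriNet} {G : WGGraph} {p : EtaleMap G P} {f : GraphMap G G}

theorem OverP.mapNA_eq_self (hover : f.OverP p p) {o : G.NA}
    (ho : f.mapN (G.tgtNode o) = G.tgtNode o) : f.mapNA o = o :=
  (p.etale_out _ _ (p.comm_tO o)).unique
    ⟨by rw [f.comm_tgtNode, ho], hover.2.2.2 o⟩ ⟨rfl, rfl⟩

theorem OverP.mapAN_eq_self (hover : f.OverP p p) {m : G.AN}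
    (hm : f.mapN (G.srcNode m) = G.srcNode m) : f.mapAN m = m :=
  (p.etale_in _ _ (p.comm_tI m)).unique
    ⟨by rw [f.comm_srcNode, hm], hover.2.1 m⟩ ⟨rfl, rfl⟩

theorem mapA_eq_self_of_tgtEdge (hin : ∀ a ∈ G.inBoundary, f.mapA a = a) (a : G.A)
    (h : ∀ o, G.tgtEdge o = a → f.mapNA o = o) : f.mapA a = a := by
  by_cases ha : a ∈ G.inBoundary
  · exact hin a ha
  · obtain ⟨o, rfl⟩ := not_not.mp ha
    rw [← f.comm_tgtEdge, h o rfl]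

theorem OverP.mapN_eq_self_of_prec (hground : Function.Surjective P.tI) (hover : f.OverP p p)
    (hin : ∀ a ∈ G.inBoundary, f.mapA a = a) (x : G.N)
    (hprec : ∀ y, G.prec y x → f.mapN y = y) : f.mapN x = x := by
  obtain ⟨i, hi⟩ := hground (p.mapN x)
  obtain ⟨m, ⟨rfl, -⟩, -⟩ := p.etale_in x i hi
  have hedge : f.mapA (G.srcEdge m) = G.srcEdge m :=
    mapA_eq_self_of_tgtEdge hin _ fun o ho =>
      hover.mapNA_eq_self (hprec _ ⟨o, m, rfl, rfl, ho⟩)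
  have harc : f.mapAN m = m := G.inj_srcEdge (by rw [f.comm_srcEdge, hedge])
  rw [← f.comm_srcNode, harc]

theorem OverP.mapN_eq_self (hground : Function.Surjective P.tI) (hG : G.Acyclic)
    (hover : f.OverP p p) (hin : ∀ a ∈ G.inBoundary, f.mapA a = a) (x : G.N) :
    f.mapN x = x := by
  induction x using hG.wellFounded_transGen.induction with
  | _ x ih =>
    exact hover.mapN_eq_self_of_prec hground hin x fun y hy => ih y (.single hy)

end GraphMap

theorem automorphism_of_BPprocess_is_id_general (P : PetriNet)
    (hground : Function.Surjective P.tI)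
    (B : Type)
    (G : WGGraph) (hG : G.Acyclic)
    (p : EtaleMap G P)
    (βG : B ≃ {a : G.A // a ∈ G.inBoundary})
    (f : GraphMap G G)
    (hover : f.OverP p p)
    (hB : ∀ b : B, f.mapA (βG b).1 = (βG b).1) :
    f.mapA = id ∧ f.mapAN = id ∧ f.mapN = id ∧ f.mapNA = id := by
  have hin : ∀ a ∈ G.inBoundary, f.mapA a = a := fun a ha => by
    simpa using hB (βG.symm ⟨a, ha⟩)
  have hN := hover.mapN_eq_self hground hG hin
  have hNA : ∀ o, f.mapNA o = o := fun o => hover.mapNA_eq_self (hN _)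
  exact ⟨funext fun a => f.mapA_eq_self_of_tgtEdge hin a fun o _ => hNA o,
    funext fun m => hover.mapAN_eq_self (hN _), funext hN, funext hNA⟩

/-- For a grounded Petri net `P` with initial marking `B`, every automorphism of
a `B`-`P`-process is the identity. -/
theorem automorphism_of_BPprocess_is_id (P : PetriNet)
    (hground : Function.Surjective P.tI)
    (B : Type) [Finite B]
    (G : WGGraph) (hG : G.Acyclic)
    (p : EtaleMap G P)
    (βG : B ≃ {a : G.A // a ∈ G.inBoundary})
    (f : GraphMap G G)
    (hisoA : Function.Bijective f.mapA) (hisoAN : Function.Bijective f.mapAN)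
    (hisoN : Function.Bijective f.mapN) (hisoNA : Function.Bijective f.mapNA)
    (hover : f.OverP p p)
    (hB : ∀ b : B, f.mapA (βG b).1 = (βG b).1) :
    f.mapA = id ∧ f.mapAN = id ∧ f.mapN = id ∧ f.mapNA = id :=
  automorphism_of_BPprocess_is_id_general P hground B G hG p βG f hover hB
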